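/- Let L ⊆ ℝⁿ be a full-rank lattice with a filtration {0} = L_0 ⊂ L_1 ⊂ ⋯ ⊂ L_m = L of primitive sublattices, let 0 < α < 1, and for 1 ≤ j ≤ m let E_{j,α}(x) = Σ_{i=j}^m α^{i−j}·π_i(x), where π_i is the orthogonal projection onto span(L_i) ∩ span(L_{i−1})^⊥. Then for all x, y ∈ ℝⁿ: Σ_{j=1}^m dist(E_{j,α}(x − y), E_{j,α}(L))² ≤ (1/(1 − α²)) · dist(x − y, L)². -/

import Mathlib

open Metric Submodule
noncomputable section

/-- The length of a shortest nonzero vector of a set `A`. -/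
def lambda1 {E : Type*} [NormedAddCommGroup E] (A : Set E) : ℝ :=
  sInf (norm '' (A \ {0}))

/-- The covering radius of a lattice (given as a set): the supremum, over points `x` in the
real span of `A`, of the distance from `x` to `A`. -/
def covRad {E : Type*} [NormedAddCommGroup E] [NormedSpace ℝ E] (A : Set E) : ℝ :=
  sSup ((fun x => Metric.infDist x A) '' ((Submodule.span ℝ A : Submodule ℝ E) : Set E))

/-- The image of the set `A` under the orthogonal projection onto the orthogonal complement
of the real span of `S`. -/
def projPerp {n : ℕ} (S A : Set (EuclideanSpace ℝ (Fin n))) : Set (EuclideanSpace ℝ (Fin n)) :=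
  (fun x => ((orthogonalProjection (Submodule.span ℝ S)ᗮ) x : EuclideanSpace ℝ (Fin n))) '' A

/-- The quotient lattice `L_j / L_{j−1}`: the orthogonal projection of `L_j` onto the
orthogonal complement of the span of `L_{j−1}`. -/
def quotLat {n : ℕ} (Ls : ℕ → Submodule ℤ (EuclideanSpace ℝ (Fin n))) (j : ℕ) :
    Set (EuclideanSpace ℝ (Fin n)) :=
  projPerp (Ls (j - 1) : Set (EuclideanSpace ℝ (Fin n)))
    (Ls j : Set (EuclideanSpace ℝ (Fin n)))

/-- `Ls 0 ⊂ Ls 1 ⊂ ⋯ ⊂ Ls m` is a chain of primitive sublattices of `L` from `{0}` to `L`. -/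
def IsPrimitiveChain {n : ℕ} (L : Submodule ℤ (EuclideanSpace ℝ (Fin n))) (m : ℕ)
    (Ls : ℕ → Submodule ℤ (EuclideanSpace ℝ (Fin n))) : Prop :=
  Ls 0 = ⊥ ∧ Ls m = L ∧ (∀ j, j < m → Ls j < Ls (j + 1)) ∧
    ∀ j, j ≤ m → (Ls j : Set (EuclideanSpace ℝ (Fin n)))
      = (L : Set (EuclideanSpace ℝ (Fin n)))
        ∩ (Submodule.span ℝ (Ls j : Set (EuclideanSpace ℝ (Fin n))) :
            Submodule ℝ (EuclideanSpace ℝ (Fin n)))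

/-- A `(q, γ)`-filtration of `L`: a chain of primitive sublattices such that
`μ(L_j/L_{j−1}) ≤ q·λ₁(L_j/L_{j−1})/2` and `λ₁(L_{j+1}/L_j) ≥ γ·λ₁(L_j/L_{j−1})`. -/
def IsQGFiltration {n : ℕ} (L : Submodule ℤ (EuclideanSpace ℝ (Fin n))) (m : ℕ)
    (Ls : ℕ → Submodule ℤ (EuclideanSpace ℝ (Fin n))) (q γ : ℝ) : Prop :=
  IsPrimitiveChain L m Ls ∧
  (∀ j, 1 ≤ j → j ≤ m → covRad (quotLat Ls j) ≤ q * lambda1 (quotLat Ls j) / 2) ∧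
  (∀ j, 1 ≤ j → j < m → lambda1 (quotLat Ls (j + 1)) ≥ γ * lambda1 (quotLat Ls j))

/-- The `j`-th "compressed projection" embedding `E_{j,α}(x) = Σ_{i=j}^m α^{i−j}·π_i(x)`,
where `π_i` is the orthogonal projection onto `span(L_i) ∩ span(L_{i−1})ᗮ`. -/
def filtEmbed {n : ℕ} (Ls : ℕ → Submodule ℤ (EuclideanSpace ℝ (Fin n))) (m : ℕ) (α : ℝ)
    (j : ℕ) (x : EuclideanSpace ℝ (Fin n)) : EuclideanSpace ℝ (Fin n) :=
  ∑ i ∈ Finset.Icc j m, α ^ (i - j) •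
    ((orthogonalProjection
        ((Submodule.span ℝ (Ls i : Set (EuclideanSpace ℝ (Fin n)))) ⊓
          (Submodule.span ℝ (Ls (i - 1) : Set (EuclideanSpace ℝ (Fin n))))ᗮ) x :
      EuclideanSpace ℝ (Fin n)))

/-! The spaces `V_i = span(L_i) ⊓ span(L_{i-1})ᗮ`, `1 ≤ i ≤ m`, are pairwise orthogonal, so
`‖E_{j,α} w‖² = Σ_{i ≥ j} α^{2(i-j)} ‖π_i w‖²`. Summing over `j` and exchanging the sums weights
each `‖π_i w‖²` by a partial geometric series `≤ 1/(1-α²)`, and Bessel's inequality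
`Σ_i ‖π_i w‖² ≤ ‖w‖²` gives `Σ_j ‖E_{j,α} w‖² ≤ ‖w‖²/(1-α²)`. Since each `E_{j,α}` is additive,
applying this to `w = x - y - v` with `v ∈ L` and taking the infimum over `v` proves the claim. -/

open scoped InnerProductSpace

section Projections

variable {E : Type*} [NormedAddCommGroup E] [InnerProductSpace ℝ E] {ι : Type*}

theorem norm_sq_sum_of_pairwise_inner_eq_zero {s : Finset ι} {f : ι → E}
    (h : (s : Set ι).Pairwise fun i k => ⟪f i, f k⟫_ℝ = 0) :
    ‖∑ i ∈ s, f i‖ ^ 2 = ∑ i ∈ s, ‖f i‖ ^ 2 := by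
  rw [← real_inner_self_eq_norm_sq, sum_inner]
  refine Finset.sum_congr rfl fun i hi => ?_
  rw [inner_sum, Finset.sum_eq_single i (fun k hk hki => h hi hk hki.symm) (absurd hi),
    real_inner_self_eq_norm_sq]

variable {s : Finset ι} {V : ι → Submodule ℝ E} [∀ i, (V i).HasOrthogonalProjection]

theorem norm_sq_sum_smul_starProjection (hV : (s : Set ι).Pairwise fun i k => V i ⟂ V k)
    (c : ι → ℝ) (w : E) :
    ‖∑ i ∈ s, c i • (V i).starProjection w‖ ^ 2
      = ∑ i ∈ s, c i ^ 2 * ‖(V i).starProjection w‖ ^ 2 := by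
  rw [norm_sq_sum_of_pairwise_inner_eq_zero]
  · simp only [norm_smul, mul_pow, Real.norm_eq_abs, sq_abs]
  · intro i hi k hk hik
    rw [real_inner_smul_left, real_inner_smul_right,
      (hV hi hk hik).inner_eq (Submodule.starProjection_apply_mem _ w)
        (Submodule.starProjection_apply_mem _ w), mul_zero, mul_zero]

theorem sum_norm_sq_starProjection_le (hV : (s : Set ι).Pairwise fun i k => V i ⟂ V k) (w : E) :
    ∑ i ∈ s, ‖(V i).starProjection w‖ ^ 2 ≤ ‖w‖ ^ 2 := by
  set t := ∑ i ∈ s, (V i).starProjection w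
  have ht : ‖t‖ ^ 2 = ∑ i ∈ s, ‖(V i).starProjection w‖ ^ 2 := by
    simpa using norm_sq_sum_smul_starProjection hV (fun _ => 1) w
  have hwt : ⟪w, t⟫_ℝ = ‖t‖ ^ 2 := by
    rw [ht, inner_sum]
    refine Finset.sum_congr rfl fun i _ => ?_
    rw [real_inner_comm]
    exact (V i).re_inner_starProjection_eq_normSq w
  have : ‖t‖ ≤ ‖w‖ := by
    nlinarith [real_inner_le_norm w t, norm_nonneg t, norm_nonneg w]
  rw [← ht]
  gcongr

end Projections

theorem sum_Icc_one_pow_sub_le {β : ℝ} (hβ0 : 0 ≤ β) (hβ1 : β < 1) (i : ℕ) :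
    ∑ j ∈ Finset.Icc 1 i, β ^ (i - j) ≤ 1 / (1 - β) := by
  rw [← Finset.Ico_add_one_right_eq_Icc, Finset.sum_Ico_reflect _ _ le_rfl, Nat.sub_self,
    ← pow_zero β]
  exact geom_sum_Ico_le_of_lt_one hβ0 hβ1

section Expansion

variable {E : Type*} [NormedAddCommGroup E] [InnerProductSpace ℝ E]
  {V : ℕ → Submodule ℝ E} [∀ i, (V i).HasOrthogonalProjection] {m : ℕ}

theorem sum_norm_sq_sum_pow_smul_starProjection_le
    (hV : (Finset.Icc 1 m : Set ℕ).Pairwise fun i k => V i ⟂ V k) {α : ℝ} (hα : α ^ 2 < 1)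
    (w : E) :
    ∑ j ∈ Finset.Icc 1 m, ‖∑ i ∈ Finset.Icc j m, α ^ (i - j) • (V i).starProjection w‖ ^ 2
      ≤ 1 / (1 - α ^ 2) * ‖w‖ ^ 2 := by
  set p : ℕ → ℝ := fun i => ‖(V i).starProjection w‖ ^ 2
  calc ∑ j ∈ Finset.Icc 1 m, ‖∑ i ∈ Finset.Icc j m, α ^ (i - j) • (V i).starProjection w‖ ^ 2
      = ∑ j ∈ Finset.Icc 1 m, ∑ i ∈ Finset.Icc j m, (α ^ 2) ^ (i - j) * p i := by
        refine Finset.sum_congr rfl fun j hj => ?_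
        have hVj :=
          hV.mono (Finset.coe_subset.2 (Finset.Icc_subset_Icc_left (Finset.mem_Icc.1 hj).1))
        simp only [norm_sq_sum_smul_starProjection hVj, ← pow_mul, mul_comm 2, p]
    _ = ∑ i ∈ Finset.Icc 1 m, (∑ j ∈ Finset.Icc 1 i, (α ^ 2) ^ (i - j)) * p i := by
        simp only [Finset.sum_mul]
        exact Finset.sum_comm' fun j i => by simp only [Finset.mem_Icc]; omega
    _ ≤ ∑ i ∈ Finset.Icc 1 m, 1 / (1 - α ^ 2) * p i := by
        gcongr
        exact sum_Icc_one_pow_sub_le (sq_nonneg α) hα _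
    _ ≤ 1 / (1 - α ^ 2) * ‖w‖ ^ 2 := by
        rw [← Finset.mul_sum]
        have : 0 < 1 - α ^ 2 := sub_pos.2 hα
        gcongr
        exact sum_norm_sq_starProjection_le hV w

end Expansion

theorem pairwise_isOrtho_inf_orthogonal_pred {E : Type*} [NormedAddCommGroup E]
    [InnerProductSpace ℝ E] {W : ℕ → Submodule ℝ E} {m : ℕ} (hW : MonotoneOn W (Set.Iic m)) :
    (Set.Iic m).Pairwise fun i k => (W i ⊓ (W (i - 1))ᗮ) ⟂ (W k ⊓ (W (k - 1))ᗮ) := by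
  have key : ∀ i k, i < k → k ≤ m → (W i ⊓ (W (i - 1))ᗮ) ⟂ (W k ⊓ (W (k - 1))ᗮ) :=
    fun i k hik hk => (Submodule.isOrtho_orthogonal_right (W (k - 1))).mono
      (inf_le_left.trans (hW (Set.mem_Iic.2 (by omega)) (Set.mem_Iic.2 (by omega)) (by omega)))
      inf_le_right
  intro i hi k hk hik
  rcases hik.lt_or_gt with h | h
  · exact key i k h hk
  · exact (key k i h hi).symm

theorem IsPrimitiveChain.monotoneOn {n m : ℕ} {L : Submodule ℤ (EuclideanSpace ℝ (Fin n))}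
    {Ls : ℕ → Submodule ℤ (EuclideanSpace ℝ (Fin n))} (h : IsPrimitiveChain L m Ls) :
    MonotoneOn Ls (Set.Iic m) :=
  monotoneOn_of_le_succ Set.ordConnected_Iic fun a _ _ ha =>
    (h.2.2.1 a ((Order.lt_succ a).trans_le ha)).le

theorem sum_sq_infDist_image_le {E F ι : Type*} [SeminormedAddCommGroup E]
    [SeminormedAddCommGroup F] {s : Finset ι} {f : ι → E →+ F} {C : ℝ} (hC : 0 < C)
    (hf : ∀ w, ∑ j ∈ s, ‖f j w‖ ^ 2 ≤ C * ‖w‖ ^ 2) {S : Set E} (hS : S.Nonempty) (z : E) :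
    ∑ j ∈ s, Metric.infDist (f j z) (f j '' S) ^ 2 ≤ C * Metric.infDist z S ^ 2 := by
  set T := ∑ j ∈ s, Metric.infDist (f j z) (f j '' S) ^ 2
  have hT : ∀ v ∈ S, T ≤ C * dist z v ^ 2 := fun v hv =>
    calc T ≤ ∑ j ∈ s, ‖f j (z - v)‖ ^ 2 := by
          refine Finset.sum_le_sum fun j _ => pow_le_pow_left₀ Metric.infDist_nonneg ?_ 2
          rw [map_sub, ← dist_eq_norm]
          exact Metric.infDist_le_dist_of_mem (Set.mem_image_of_mem _ hv)
      _ ≤ C * dist z v ^ 2 := by rw [dist_eq_norm]; exact hf _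
  have : √(T / C) ≤ Metric.infDist z S :=
    (Metric.le_infDist hS).2 fun v hv =>
      Real.sqrt_le_iff.2 ⟨dist_nonneg, (div_le_iff₀' hC).2 (hT v hv)⟩
  have hT0 : 0 ≤ T := by positivity
  calc T = C * √(T / C) ^ 2 := by rw [Real.sq_sqrt (by positivity)]; field_simp
    _ ≤ C * Metric.infDist z S ^ 2 := by gcongr

theorem filtEmbed_expansion
    (n : ℕ) (L : Submodule ℤ (EuclideanSpace ℝ (Fin n)))
    (m : ℕ) (Ls : ℕ → Submodule ℤ (EuclideanSpace ℝ (Fin n))) (hchain : IsPrimitiveChain L m Ls)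
    (α : ℝ) (hα0 : 0 < α) (hα1 : α < 1) (x y : EuclideanSpace ℝ (Fin n)) :
    ∑ j ∈ Finset.Icc 1 m,
        Metric.infDist (filtEmbed Ls m α j (x - y))
          (filtEmbed Ls m α j '' (L : Set (EuclideanSpace ℝ (Fin n)))) ^ 2
      ≤ 1 / (1 - α ^ 2) * Metric.infDist (x - y) (L : Set (EuclideanSpace ℝ (Fin n))) ^ 2 := by
  have hα : α ^ 2 < 1 := by nlinarith
  have hspan : Monotone fun K : Submodule ℤ (EuclideanSpace ℝ (Fin n)) =>
      span ℝ (K : Set (EuclideanSpace ℝ (Fin n))) :=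
    fun _ _ h => span_mono h
  have hortho := pairwise_isOrtho_inf_orthogonal_pred (hspan.comp_monotoneOn hchain.monotoneOn)
  let emb : ℕ → EuclideanSpace ℝ (Fin n) →+ EuclideanSpace ℝ (Fin n) := fun j =>
    AddMonoidHom.mk' (filtEmbed Ls m α j) fun a b => by
      simp only [filtEmbed, map_add, Submodule.coe_add, smul_add, Finset.sum_add_distrib]
  refine sum_sq_infDist_image_le (f := emb) (one_div_pos.2 (sub_pos.2 hα))
    (fun w => sum_norm_sq_sum_pow_smul_starProjection_le ?_ hα w) ⟨0, L.zero_mem⟩ (x - y)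
  exact hortho.mono fun i hi => (Finset.mem_Icc.1 hi).2
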